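/- arXiv:0809.2749 — 3 statements merged into one kernel-verified Lean document; each statement's English description precedes it below -/
import Mathlib

section
/- Let (V₁, ω₁) and (V₂, ω₂) both be bicentric HL with the same bicenter {n, n+1}, and let U : V₁ → V₂ be a (not necessarily graded) ℂ-linear isomorphism with U ∘ ω₁ = ω₂ ∘ U. Then for every p ∈ ℚ, U(V₁^p) ⊆ ⊕_{q ≥ p−1} V₂^q. (An isomorphism commuting with the nilpotent operators can decrease degrees by at most 1.) -/
/-- `ω` is a degree-2 endomorphism with respect to the ℚ-grading `Vp`. -/
def IsDegreeTwo {V : Type} [AddCommGroup V] [Module ℂ V]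
    (Vp : ℚ → Submodule ℂ V) (ω : Module.End ℂ V) : Prop :=
  ∀ p : ℚ, (Vp p).map ω ≤ Vp (p + 2)

/-- `(V, ω)` (with grading `Vp`) is bicentric HL with bicenter `{n, n+1}`. -/
def BicentricHL {V : Type} [AddCommGroup V] [Module ℂ V]
    (Vp : ℚ → Submodule ℂ V) (ω : Module.End ℂ V) (n : ℚ) : Prop :=
  (∀ p : ℚ, Vp p ≠ ⊥ → ∃ m : ℤ, p = n + m) ∧
  ∃ W : Fin 2 → ℚ → Submodule ℂ V,
    (∀ p : ℚ, W 0 p ⊓ W 1 p = ⊥) ∧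
    (∀ p : ℚ, W 0 p ⊔ W 1 p = Vp p) ∧
    (∀ j : Fin 2, ∀ p : ℚ, (W j p).map ω ≤ W j (p + 2)) ∧
    (∀ j : Fin 2, ∀ k : ℕ,
      (W j (n + ((j : ℕ) : ℚ) - (k : ℚ))).map (ω ^ k)
        = W j (n + ((j : ℕ) : ℚ) + (k : ℚ)) ∧
      ∀ v ∈ W j (n + ((j : ℕ) : ℚ) - (k : ℚ)), (ω ^ k) v = 0 → v = 0)

open Submodule LinearMap

variable {V : Type} [AddCommGroup V] [Module ℂ V]

lemma indep_sum_zero {ι : Type} [DecidableEq ι] {p : ι → Submodule ℂ V} (h : iSupIndep p)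
    (s : Finset ι) (x : ι → V) (hx : ∀ i ∈ s, x i ∈ p i)
    (hs : ∑ i ∈ s, x i = 0) : ∀ i ∈ s, x i = 0 := by
  intro i hi
  have h1 : x i ∈ p i := hx i hi
  have hxi : x i = -∑ j ∈ s.erase i, x j := by
    have h0 := Finset.add_sum_erase s x hi
    rw [hs] at h0
    exact eq_neg_of_add_eq_zero_left h0
  have h2 : x i ∈ ⨆ (j) (_ : j ≠ i), p j := by
    rw [hxi]
    refine neg_mem (Submodule.sum_mem _ fun j hj => ?_)
    have hji : j ≠ i := Finset.ne_of_mem_erase hj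
    exact Submodule.mem_iSup_of_mem j (Submodule.mem_iSup_of_mem hji
      (hx j (Finset.mem_of_mem_erase hj)))
  have h3 := (h i).le_bot ⟨h1, h2⟩
  simpa using h3

lemma pow_apply_succ (ω : Module.End ℂ V) (a : ℕ) (y : V) :
    (ω ^ a) (ω y) = (ω ^ (a + 1)) y := by
  rw [pow_succ, Module.End.mul_apply]

lemma apply_pow_succ (ω : Module.End ℂ V) (a : ℕ) (y : V) :
    ω ((ω ^ a) y) = (ω ^ (a + 1)) y := by
  rw [pow_succ', Module.End.mul_apply]

lemma pow_pow_apply (ω : Module.End ℂ V) (a b : ℕ) (y : V) :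
    (ω ^ a) ((ω ^ b) y) = (ω ^ (a + b)) y := by
  rw [← Module.End.mul_apply, ← pow_add]

lemma degiter (ω : Module.End ℂ V) (W : ℚ → Submodule ℂ V)
    (h : ∀ q, (W q).map ω ≤ W (q + 2)) (b : ℕ) (q : ℚ) {v : V} (hv : v ∈ W q) :
    (ω ^ b) v ∈ W (q + 2 * b) := by
  induction b generalizing q v with
  | zero => simpa using hv
  | succ b ih =>
    have h1 : (ω ^ b) v ∈ W (q + 2 * b) := ih q hv
    have h2 : ω ((ω ^ b) v) ∈ W (q + 2 * b + 2) := h _ ⟨_, h1, rfl⟩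
    have he : q + 2 * b + 2 = q + 2 * (b + 1 : ℕ) := by push_cast; ring
    rw [he] at h2
    rw [pow_succ']
    exact h2

lemma range_pow_antitone (ω : Module.End ℂ V) {a b : ℕ} (hab : a ≤ b) :
    LinearMap.range (ω ^ b) ≤ LinearMap.range (ω ^ a) := by
  rintro x ⟨y, rfl⟩
  refine ⟨(ω ^ (b - a)) y, ?_⟩
  rw [pow_pow_apply]
  have h1 : a + (b - a) = b := by omega
  rw [h1]

/-- the core primitive-decomposition lemma for a single HL family -/
lemma hl_core (ω : Module.End ℂ V) (W : ℚ → Submodule ℂ V) (c : ℚ)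
    (hdegW : ∀ q, (W q).map ω ≤ W (q + 2))
    (hiso : ∀ K : ℕ, (W (c - K)).map (ω ^ K) = W (c + K))
    (hinj : ∀ K : ℕ, ∀ v ∈ W (c - K), (ω ^ K) v = 0 → v = 0)
    (N : ℕ) (hN : ω ^ N = 0) :
    ∀ d s : ℕ, N ≤ s + d → ∀ v ∈ W (c - s),
      v ∈ ⨆ i : ℕ, (LinearMap.ker (ω ^ (i + s + 1)) ⊓ LinearMap.range (ω ^ i)) := by
  intro d
  induction d with
  | zero =>
    intro s hs v hv
    have hz : (ω ^ s) v = 0 := by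
      have h1 : ω ^ s = ω ^ (s - N) * ω ^ N := by rw [← pow_add]; congr 1; omega
      rw [h1, Module.End.mul_apply, hN]
      simp
    rw [hinj s v hv hz]
    exact zero_mem _
  | succ d ih =>
    intro s hs v hv
    have h1 : (ω ^ (s + 1)) v ∈ W (c - s + 2 * (s + 1 : ℕ)) := degiter ω W hdegW (s + 1) _ hv
    have he : c - (s:ℚ) + 2 * ((s:ℕ) + 1 : ℕ) = c + ((s + 2 : ℕ) : ℚ) := by push_cast; ring
    rw [he, ← hiso (s + 2)] at h1
    obtain ⟨u, hu, huv⟩ := h1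
    have hker : (ω ^ (s + 1)) (v - ω u) = 0 := by
      rw [map_sub, pow_apply_succ, huv, sub_self]
    have hm1 : v - ω u ∈ ⨆ i : ℕ, (LinearMap.ker (ω ^ (i + s + 1)) ⊓ LinearMap.range (ω ^ i)) := by
      refine Submodule.mem_iSup_of_mem 0 ⟨?_, ⟨v - ω u, by simp⟩⟩
      simpa using hker
    have hu2 : u ∈ ⨆ i : ℕ, (LinearMap.ker (ω ^ (i + (s + 2) + 1)) ⊓ LinearMap.range (ω ^ i)) :=
      ih (s + 2) (by omega) u hu
    have hm2 : ω u ∈ ⨆ i : ℕ, (LinearMap.ker (ω ^ (i + s + 1)) ⊓ LinearMap.range (ω ^ i)) := by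
      have hmap : Submodule.map ω
          (⨆ i : ℕ, (LinearMap.ker (ω ^ (i + (s + 2) + 1)) ⊓ LinearMap.range (ω ^ i)))
          ≤ ⨆ i : ℕ, (LinearMap.ker (ω ^ (i + s + 1)) ⊓ LinearMap.range (ω ^ i)) := by
        rw [Submodule.map_iSup]
        refine iSup_le fun i => ?_
        refine le_trans (Submodule.map_inf_le _) ?_
        refine le_trans (inf_le_inf ?_ ?_)
          (le_iSup (fun i : ℕ => LinearMap.ker (ω ^ (i + s + 1)) ⊓ LinearMap.range (ω ^ i)) (i+1))
        · rintro x ⟨y, hy, rfl⟩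
          simp only [LinearMap.mem_ker] at hy ⊢
          rw [pow_apply_succ]
          have hee : i + 1 + s + 1 + 1 = i + (s + 2) + 1 := by omega
          rw [hee]
          exact hy
        · rintro x ⟨y, ⟨z, rfl⟩, rfl⟩
          exact ⟨z, (apply_pow_succ ω i z).symm⟩
      exact hmap ⟨u, hu2, rfl⟩
    have hvw : v = (v - ω u) + ω u := by abel
    rw [hvw]
    exact add_mem hm1 hm2

/-- membership in the canonical ker/range sup for an element of an HL family -/
lemma hl_memG (ω : Module.End ℂ V) (W : ℚ → Submodule ℂ V) (c : ℚ)
    (hdegW : ∀ q, (W q).map ω ≤ W (q + 2))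
    (hiso : ∀ K : ℕ, (W (c - K)).map (ω ^ K) = W (c + K))
    (hinj : ∀ K : ℕ, ∀ v ∈ W (c - K), (ω ^ K) v = 0 → v = 0)
    (N : ℕ) (hN : ω ^ N = 0) (w k : ℤ) (hk : k ≤ w) :
    ∀ v ∈ W (c + (w : ℚ)),
      v ∈ ⨆ j : ℕ, (LinearMap.ker (ω ^ (j + 1)) ⊓
        LinearMap.range (ω ^ (((j : ℤ) + k).toNat))) := by
  intro v hv
  rcases le_or_gt w 0 with hw | hw
  · set s : ℕ := (-w).toNat with hs
    have hsw : (s : ℤ) = -w := Int.toNat_of_nonneg (by omega)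
    have hcs : c + (w : ℚ) = c - (s : ℚ) := by
      have h2 : (s : ℚ) = -(w : ℚ) := by exact_mod_cast congrArg (fun z : ℤ => (z : ℚ)) hsw
      rw [h2]; ring
    rw [hcs] at hv
    have hcore := hl_core ω W c hdegW hiso hinj N hN N s (by omega) v hv
    have hle : (⨆ i : ℕ, (LinearMap.ker (ω ^ (i + s + 1)) ⊓ LinearMap.range (ω ^ i)))
        ≤ ⨆ j : ℕ, (LinearMap.ker (ω ^ (j + 1)) ⊓
          LinearMap.range (ω ^ (((j : ℤ) + k).toNat))) := by
      refine iSup_le fun i => ?_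
      have h1 : ((((i + s : ℕ) : ℤ) + k).toNat) ≤ i := by omega
      exact le_trans (inf_le_inf le_rfl (range_pow_antitone ω h1))
        (le_iSup (fun j : ℕ => LinearMap.ker (ω ^ (j + 1)) ⊓
          LinearMap.range (ω ^ (((j : ℤ) + k).toNat))) (i + s))
    exact hle hcore
  · set s : ℕ := w.toNat with hs
    have hsw : (s : ℤ) = w := Int.toNat_of_nonneg (by omega)
    have hcs : c + (w : ℚ) = c + (s : ℚ) := by
      have h2 : (s : ℚ) = (w : ℚ) := by exact_mod_cast congrArg (fun z : ℤ => (z : ℚ)) hsw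
      rw [h2]
    rw [hcs, ← hiso s] at hv
    obtain ⟨u, hu, rfl⟩ := hv
    have hcore := hl_core ω W c hdegW hiso hinj N hN N s (by omega) u hu
    have hle : Submodule.map (ω ^ s)
        (⨆ i : ℕ, (LinearMap.ker (ω ^ (i + s + 1)) ⊓ LinearMap.range (ω ^ i)))
        ≤ ⨆ j : ℕ, (LinearMap.ker (ω ^ (j + 1)) ⊓
          LinearMap.range (ω ^ (((j : ℤ) + k).toNat))) := by
      rw [Submodule.map_iSup]
      refine iSup_le fun i => ?_
      refine le_trans (Submodule.map_inf_le _) ?_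
      refine le_trans (inf_le_inf ?_ ?_)
        (le_iSup (fun j : ℕ => LinearMap.ker (ω ^ (j + 1)) ⊓
          LinearMap.range (ω ^ (((j : ℤ) + k).toNat))) i)
      · rintro x ⟨y, hy, rfl⟩
        simp only [LinearMap.mem_ker] at hy ⊢
        rw [pow_pow_apply]
        have hee : i + 1 + s = i + s + 1 := by omega
        rw [hee]
        exact hy
      · rintro x ⟨y, ⟨z, rfl⟩, rfl⟩
        have h1 : (((i : ℤ) + k).toNat) ≤ s + i := by omega
        exact range_pow_antitone ω h1 ⟨z, (pow_pow_apply ω s i z).symm⟩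
    exact hle ⟨u, hcore, rfl⟩

/-- each ker/range term lands in the upper part of the grading -/
lemma hl_target (ω : Module.End ℂ V) (Vp : ℚ → Submodule ℂ V)
    (hg : DirectSum.IsInternal Vp) (n : ℚ)
    (hrat : ∀ p : ℚ, Vp p ≠ ⊥ → ∃ e : ℤ, p = n + e)
    (hdeg : ∀ p : ℚ, (Vp p).map ω ≤ Vp (p + 2))
    (W : Fin 2 → ℚ → Submodule ℂ V)
    (hmeet : ∀ p : ℚ, W 0 p ⊓ W 1 p = ⊥)
    (hjoin : ∀ p : ℚ, W 0 p ⊔ W 1 p = Vp p)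
    (hdegW : ∀ (j : Fin 2) (p : ℚ), (W j p).map ω ≤ W j (p + 2))
    (hinj : ∀ (J : Fin 2) (K : ℕ), ∀ v ∈ W J (n + ((J : ℕ) : ℚ) - (K : ℚ)),
      (ω ^ K) v = 0 → v = 0)
    (m : ℤ) (j : ℕ) :
    (LinearMap.ker (ω ^ (j + 1)) ⊓ LinearMap.range (ω ^ (((j : ℤ) + (m - 1)).toNat)))
      ≤ ⨆ (q : ℚ) (_ : n + (m : ℚ) - 1 ≤ q), Vp q := by
  classical
  set b : ℕ := ((j : ℤ) + (m - 1)).toNat with hb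
  have hbge : (j : ℤ) + (m - 1) ≤ (b : ℤ) := Int.self_le_toNat _
  rintro x ⟨hker, y, rfl⟩
  rw [SetLike.mem_coe, LinearMap.mem_ker] at hker
  have hy : y ∈ ⨆ q, Vp q := by rw [hg.submodule_iSup_eq_top]; trivial
  rw [Submodule.mem_iSup_iff_exists_dfinsupp'] at hy
  obtain ⟨f, hf⟩ := hy
  have hsum : ∑ q ∈ f.support, ((f q : V)) = y := hf
  set C : ℕ := j + 1 + b with hC
  have hcomp : ∀ q ∈ f.support, (ω ^ C) ((f q : V)) = 0 := by
    have hind : iSupIndep (fun q : ℚ => Vp (q + 2 * (C : ℚ))) := by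
      refine hg.submodule_iSupIndep.comp (fun q q' hqq => ?_)
      have := congrArg (fun z : ℚ => z - 2 * (C : ℚ)) hqq
      simpa using this
    refine indep_sum_zero hind f.support _ (fun q _ => degiter ω Vp hdeg C q (f q).2) ?_
    rw [pow_pow_apply ω (j + 1) b y] at hker
    rw [← map_sum, hsum]
    exact hker
  have hxsum : (ω ^ b) y = ∑ q ∈ f.support, (ω ^ b) ((f q : V)) := by
    rw [← map_sum, hsum]
  rw [hxsum]
  refine Submodule.sum_mem _ fun q hq => ?_
  by_cases hcase : n + (m : ℚ) - 1 ≤ q + 2 * (b : ℚ)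
  · exact Submodule.mem_iSup_of_mem (q + 2 * b)
      (Submodule.mem_iSup_of_mem hcase (degiter ω Vp hdeg b q (f q).2))
  · have hfq : ((f q : V)) ∈ W 0 q ⊔ W 1 q := by rw [hjoin]; exact (f q).2
    obtain ⟨a0, ha0, a1, ha1, hsum01⟩ := Submodule.mem_sup.mp hfq
    have hadd : (ω ^ C) a0 + (ω ^ C) a1 = 0 := by
      rw [← map_add, hsum01]; exact hcomp q hq
    have hCa0 : (ω ^ C) a0 = 0 := by
      have h0 : (ω ^ C) a0 ∈ W 0 (q + 2 * C) := degiter ω (W 0) (hdegW 0) C q ha0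
      have h1 : (ω ^ C) a1 ∈ W 1 (q + 2 * C) := degiter ω (W 1) (hdegW 1) C q ha1
      have h2 : (ω ^ C) a0 ∈ W 0 (q + 2 * C) ⊓ W 1 (q + 2 * C) := by
        refine ⟨h0, ?_⟩
        have : (ω ^ C) a0 = -((ω ^ C) a1) := eq_neg_of_add_eq_zero_left hadd
        rw [this]; exact neg_mem h1
      rw [hmeet] at h2
      simpa using h2
    have hCa1 : (ω ^ C) a1 = 0 := by
      have := hadd; rw [hCa0, zero_add] at this; exact this
    have key : ∀ (J : Fin 2) (a : V), a ∈ W J q → (ω ^ C) a = 0 → a = 0 := by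
      intro J a haW haC
      by_cases ha : a = 0
      · exact ha
      have hWle : W J q ≤ Vp q := by
        rw [← hjoin]
        fin_cases J
        · exact le_sup_left
        · exact le_sup_right
      have hVq : Vp q ≠ ⊥ := by
        intro hbot
        exact ha (by simpa using (hbot ▸ hWle haW : a ∈ (⊥ : Submodule ℂ V)))
      obtain ⟨e, he⟩ := hrat q hVq
      have hqe : q + 2 * (b : ℚ) < n + (m : ℚ) - 1 := not_le.mp hcase
      have heZ : e + 2 * (b : ℤ) < m - 1 := by
        rw [he] at hqe
        exact_mod_cast (by linarith : (e : ℚ) + 2 * (b : ℚ) < (m : ℚ) - 1)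
      have hJ1 : ((J : ℕ) : ℤ) ≤ 1 := by exact_mod_cast Fin.is_le J
      have hKnn : (0 : ℤ) ≤ (J : ℕ) - e := by omega
      have hKC : ((C : ℕ) : ℤ) ≥ (j : ℤ) + 1 + (b : ℤ) := by
        rw [hC]; push_cast; omega
      have hKC2 : ((C : ℕ) : ℤ) ≤ ((J : ℕ) : ℤ) - e := by
        rw [hC]; push_cast; omega
      set K : ℕ := (((J : ℕ) : ℤ) - e).toNat with hK
      have hKi : (K : ℤ) = ((J : ℕ) : ℤ) - e := Int.toNat_of_nonneg hKnn
      have hqK : q = n + ((J : ℕ) : ℚ) - (K : ℚ) := by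
        have hcst : (K : ℚ) = ((J : ℕ) : ℚ) - (e : ℚ) := by exact_mod_cast hKi
        rw [he, hcst]; ring
      have hKw : (ω ^ K) a = 0 := by
        have hCK : C ≤ K := by omega
        have hsplit : ω ^ K = ω ^ (K - C) * ω ^ C := by
          rw [← pow_add]; congr 1; omega
        rw [hsplit, Module.End.mul_apply, haC, map_zero]
      exact hinj J K a (hqK ▸ haW) hKw
    have hz : ((f q : V)) = 0 := by
      rw [← hsum01, key 0 a0 ha0 hCa0, key 1 a1 ha1 hCa1, add_zero]
    rw [hz, map_zero]
    exact zero_mem _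

lemma intertw_pow {V₁ V₂ : Type} [AddCommGroup V₁] [Module ℂ V₁] [AddCommGroup V₂] [Module ℂ V₂]
    (ω₁ : Module.End ℂ V₁) (ω₂ : Module.End ℂ V₂) (U : V₁ ≃ₗ[ℂ] V₂)
    (hU : ∀ v : V₁, U (ω₁ v) = ω₂ (U v)) (t : ℕ) (v : V₁) :
    U ((ω₁ ^ t) v) = (ω₂ ^ t) (U v) := by
  induction t generalizing v with
  | zero => simp
  | succ t ih =>
    rw [← pow_apply_succ ω₁ t v, ih (ω₁ v), hU, pow_apply_succ]

/-- If `(V₁, ω₁)` and `(V₂, ω₂)` are both bicentric HL with the same bicenter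
`{n, n+1}` and `U : V₁ ≃ V₂` is a (not necessarily graded) linear isomorphism
with `U ∘ ω₁ = ω₂ ∘ U`, then `U(V₁^p) ⊆ ⊕_{q ≥ p-1} V₂^q` for every `p`. -/
theorem bicentricHL_intertwiner_decreases_degree_at_most_one
    {V₁ V₂ : Type} [AddCommGroup V₁] [Module ℂ V₁] [AddCommGroup V₂] [Module ℂ V₂]
    [FiniteDimensional ℂ V₁] [FiniteDimensional ℂ V₂]
    (Vp₁ : ℚ → Submodule ℂ V₁) (Vp₂ : ℚ → Submodule ℂ V₂)
    (hg₁ : DirectSum.IsInternal Vp₁) (hg₂ : DirectSum.IsInternal Vp₂)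
    (ω₁ : Module.End ℂ V₁) (ω₂ : Module.End ℂ V₂)
    (hnil₁ : IsNilpotent ω₁) (hnil₂ : IsNilpotent ω₂)
    (hdeg₁ : IsDegreeTwo Vp₁ ω₁) (hdeg₂ : IsDegreeTwo Vp₂ ω₂)
    (n : ℚ) (hHL₁ : BicentricHL Vp₁ ω₁ n) (hHL₂ : BicentricHL Vp₂ ω₂ n)
    (U : V₁ ≃ₗ[ℂ] V₂) (hU : ∀ v : V₁, U (ω₁ v) = ω₂ (U v)) :
    ∀ p : ℚ, ∀ v ∈ Vp₁ p, U v ∈ ⨆ (q : ℚ) (_ : p - 1 ≤ q), Vp₂ q := by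
  intro p v hv
  by_cases hv0 : v = 0
  · rw [hv0, map_zero]; exact zero_mem _
  obtain ⟨hrat₁, W₁, hmeet₁, hjoin₁, hdegW₁, hHLW₁⟩ := hHL₁
  obtain ⟨hrat₂, W₂, hmeet₂, hjoin₂, hdegW₂, hHLW₂⟩ := hHL₂
  have hne : Vp₁ p ≠ ⊥ := by
    intro hbot
    exact hv0 (by simpa using (hbot ▸ hv : v ∈ (⊥ : Submodule ℂ V₁)))
  obtain ⟨m, hp⟩ := hrat₁ p hne
  subst hp
  obtain ⟨N, hN⟩ := hnil₁
  have hkey : ∀ (J : Fin 2), ∀ x ∈ W₁ J (n + (m : ℚ)),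
      x ∈ ⨆ j : ℕ, (LinearMap.ker (ω₁ ^ (j + 1)) ⊓
        LinearMap.range (ω₁ ^ (((j : ℤ) + (m - 1)).toNat))) := by
    intro J x hx
    have hJ1 : ((J : ℕ) : ℤ) ≤ 1 := by exact_mod_cast Fin.is_le J
    have hc : n + (m : ℚ) = (n + ((J : ℕ) : ℚ)) + ((m - ((J : ℕ) : ℤ) : ℤ) : ℚ) := by
      push_cast; ring
    rw [hc] at hx
    exact hl_memG ω₁ (W₁ J) (n + ((J : ℕ) : ℚ)) (hdegW₁ J)
      (fun K => (hHLW₁ J K).1) (fun K => (hHLW₁ J K).2) N hN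
      (m - ((J : ℕ) : ℤ)) (m - 1) (by omega) x hx
  have hvG : v ∈ ⨆ j : ℕ, (LinearMap.ker (ω₁ ^ (j + 1)) ⊓
      LinearMap.range (ω₁ ^ (((j : ℤ) + (m - 1)).toNat))) := by
    rw [← hjoin₁] at hv
    obtain ⟨x0, hx0, x1, hx1, rfl⟩ := Submodule.mem_sup.mp hv
    exact add_mem (hkey 0 x0 hx0) (hkey 1 x1 hx1)
  have hUG : U v ∈ ⨆ j : ℕ, (LinearMap.ker (ω₂ ^ (j + 1)) ⊓
      LinearMap.range (ω₂ ^ (((j : ℤ) + (m - 1)).toNat))) := by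
    have hle : Submodule.map (U : V₁ →ₗ[ℂ] V₂)
        (⨆ j : ℕ, (LinearMap.ker (ω₁ ^ (j + 1)) ⊓
          LinearMap.range (ω₁ ^ (((j : ℤ) + (m - 1)).toNat))))
        ≤ ⨆ j : ℕ, (LinearMap.ker (ω₂ ^ (j + 1)) ⊓
          LinearMap.range (ω₂ ^ (((j : ℤ) + (m - 1)).toNat))) := by
      rw [Submodule.map_iSup]
      refine iSup_le fun j => ?_
      refine le_trans (Submodule.map_inf_le _) (le_trans (inf_le_inf ?_ ?_)
        (le_iSup (fun j : ℕ => LinearMap.ker (ω₂ ^ (j + 1)) ⊓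
          LinearMap.range (ω₂ ^ (((j : ℤ) + (m - 1)).toNat))) j))
      · rintro x ⟨y, hy, rfl⟩
        rw [SetLike.mem_coe, LinearMap.mem_ker] at hy
        rw [LinearMap.mem_ker]
        show (ω₂ ^ (j + 1)) (U y) = 0
        rw [← intertw_pow ω₁ ω₂ U hU (j + 1) y, hy, map_zero]
      · rintro x ⟨y, ⟨z, rfl⟩, rfl⟩
        exact ⟨U z, (intertw_pow ω₁ ω₂ U hU _ z).symm⟩
    exact hle ⟨v, hvG, rfl⟩
  have hfin : (⨆ j : ℕ, (LinearMap.ker (ω₂ ^ (j + 1)) ⊓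
      LinearMap.range (ω₂ ^ (((j : ℤ) + (m - 1)).toNat))))
      ≤ ⨆ (q : ℚ) (_ : n + (m : ℚ) - 1 ≤ q), Vp₂ q :=
    iSup_le fun j => hl_target ω₂ Vp₂ hg₂ n hrat₂ hdeg₂ W₂ hmeet₂ hjoin₂ hdegW₂
      (fun J K => (hHLW₂ J K).2) m j
  exact hfin hUG
end

section
/- Let G : ℂ² → ℂ² be the ℂ-linear map with matrix [[1, 0], [−2πi, 1]] (in the standard basis e₁, e₂), and let B : ℂ² × ℂ² → ℂ be the ℂ-bilinear form with B(e₁, e₁) = 2π, B(e₁, e₂) = i, B(e₂, e₁) = −i, B(e₂, e₂) = 0. Let L ⊆ ℂ² be a lattice, i.e. the ℤ-span of two vectors that are linearly independent over ℂ. Suppose that G(L) ⊆ L, that B(L × L) ⊆ ℤ, and that the restriction of B to L × L is a perfect (unimodular) ℤ-valued pairing, i.e. the induced map L → Hom_ℤ(L, ℤ), x ↦ B(x, ·), is bijective. Then there exist a nonzero integer n, a complex number c, and a complex number s with s² = n/(2π), such that L = ℤ · s·(e₁ + c e₂) + ℤ · (i/s)·e₂. -/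
open Complex

/-- The first standard basis vector `e₁ = (1, 0)` of `ℂ²`. -/
noncomputable def e₁ : ℂ × ℂ := (1, 0)

/-- The second standard basis vector `e₂ = (0, 1)` of `ℂ²`. -/
noncomputable def e₂ : ℂ × ℂ := (0, 1)

/-- The ℂ-linear map `ℂ² → ℂ²` with matrix `[[1, 0], [-2πi, 1]]` in the
standard basis, i.e. `G(e₁) = e₁ - 2πi·e₂`, `G(e₂) = e₂`. -/
noncomputable def Gmap : ℂ × ℂ → ℂ × ℂ :=
  fun x => (x.1, -(2 * (Real.pi : ℂ) * I) * x.1 + x.2)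

/-- The ℂ-bilinear form on `ℂ²` with `B(e₁,e₁) = 2π`, `B(e₁,e₂) = i`,
`B(e₂,e₁) = -i`, `B(e₂,e₂) = 0`. -/
noncomputable def Bform : ℂ × ℂ → ℂ × ℂ → ℂ :=
  fun x y => 2 * (Real.pi : ℂ) * x.1 * y.1 + I * x.1 * y.2 - I * x.2 * y.1

private lemma exists_gen' (S : Set ℤ) : ∃ g : ℤ, g ∈ Submodule.span ℤ S ∧ ∀ m ∈ S, g ∣ m := by
  obtain ⟨g, hg⟩ := Submodule.IsPrincipal.principal (Ideal.span S)
  refine ⟨g, ?_, ?_⟩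
  · show g ∈ Ideal.span S
    rw [hg]
    exact Ideal.mem_span_singleton_self g
  · intro m hm
    have : m ∈ Ideal.span S := Ideal.subset_span hm
    rw [hg] at this
    exact Ideal.mem_span_singleton.mp this

private lemma gen_real {M : Type*} [AddCommGroup M] [Module ℤ M] (K : Submodule ℤ M)
    (f : M →ₗ[ℤ] ℂ) :
    ∃ g : ℤ, (∃ x ∈ K, (g : ℂ) = f x) ∧ ∀ m : ℤ, (∃ x ∈ K, (m : ℂ) = f x) → g ∣ m := by
  obtain ⟨g, hgmem, hgdiv⟩ := exists_gen' {m : ℤ | ∃ x ∈ K, (m : ℂ) = f x}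
  refine ⟨g, ?_, fun m hm => hgdiv m hm⟩
  clear hgdiv
  induction hgmem using Submodule.span_induction with
  | mem m hm => exact hm
  | zero => exact ⟨0, K.zero_mem, by simp⟩
  | add m m' _ _ h h' =>
    obtain ⟨x, hx, hfx⟩ := h
    obtain ⟨y, hy, hfy⟩ := h'
    exact ⟨x + y, K.add_mem hx hy, by push_cast; rw [map_add, hfx, hfy]⟩
  | smul z m _ h =>
    obtain ⟨x, hx, hfx⟩ := h
    refine ⟨_, K.smul_mem z hx, ?_⟩
    rw [f.map_smul, smul_eq_mul, zsmul_eq_mul]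
    push_cast
    rw [hfx]

private lemma lift_int {M : Type*} [AddCommGroup M] [Module ℤ M] (ψ : M →ₗ[ℤ] ℂ)
    (h : ∀ y, ∃ m : ℤ, ψ y = (m : ℂ)) : ∃ F : M →ₗ[ℤ] ℤ, ∀ y, ((F y : ℤ) : ℂ) = ψ y := by
  choose F hF using h
  have hadd : ∀ x y, F (x + y) = F x + F y := by
    intro x y
    have : ((F (x + y) : ℤ) : ℂ) = ((F x + F y : ℤ) : ℂ) := by
      push_cast
      rw [← hF, ← hF, ← hF, map_add]
    exact_mod_cast this
  have hzero : F 0 = 0 := by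
    have : ((F 0 : ℤ) : ℂ) = ((0 : ℤ) : ℂ) := by rw [← hF, map_zero]; simp
    exact_mod_cast this
  refine ⟨LinearMap.mk ⟨F, hadd⟩ ?_, fun y => (hF y).symm⟩
  intro z x
  have key := ψ.map_smul z x
  simp only [hF, zsmul_eq_mul] at key
  simp only [RingHom.id_apply, smul_eq_mul]
  exact_mod_cast key

/-- Classification of lattices `L ⊆ ℂ²` invariant under `G` and carrying a
perfect (unimodular) integer-valued restriction of `B`: every such lattice is
`ℤ·s(e₁ + c·e₂) ⊕ ℤ·(i/s)·e₂` with `s² = n/(2π)` for some nonzero integer `n`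
and some `c ∈ ℂ`. -/
theorem lattice_classification_P1
    (v₁ v₂ : ℂ × ℂ) (hind : LinearIndependent ℂ ![v₁, v₂])
    (L : Submodule ℤ (ℂ × ℂ)) (hL : L = Submodule.span ℤ {v₁, v₂})
    (hG : ∀ x ∈ L, Gmap x ∈ L)
    (hBint : ∀ x ∈ L, ∀ y ∈ L, ∃ m : ℤ, Bform x y = (m : ℂ))
    (hinj : ∀ x ∈ L, (∀ y ∈ L, Bform x y = 0) → x = 0)
    (hsurj : ∀ f : L →ₗ[ℤ] ℤ, ∃ x ∈ L, ∀ y : L, Bform x (y : ℂ × ℂ) = ((f y : ℤ) : ℂ)) :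
    ∃ n : ℤ, n ≠ 0 ∧ ∃ c s : ℂ, s ^ 2 = (n : ℂ) / (2 * (Real.pi : ℂ)) ∧
      L = Submodule.span ℤ ({s • (e₁ + c • e₂), (I / s) • e₂} : Set (ℂ × ℂ)) := by
  classical
  have hpi : (2 * (Real.pi : ℂ)) ≠ 0 := by
    simp [Real.pi_ne_zero]
  have hpair := LinearIndependent.pair_iff.mp hind
  have hv₁L : v₁ ∈ L := by rw [hL]; exact Submodule.subset_span (by simp)
  have hv₂L : v₂ ∈ L := by rw [hL]; exact Submodule.subset_span (by simp)
  -- the determinant of the pair is nonzero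
  have hΔ : v₁.1 * v₂.2 - v₁.2 * v₂.1 ≠ 0 := by
    intro h0
    have h1 : v₂.1 • v₁ + (-v₁.1) • v₂ = 0 := by
      apply Prod.ext_iff.mpr
      constructor
      · show v₂.1 * v₁.1 + (-v₁.1) * v₂.1 = 0
        ring
      · show v₂.1 * v₁.2 + (-v₁.1) * v₂.2 = 0
        linear_combination -h0
    obtain ⟨ha2, ha1⟩ := hpair _ _ h1
    have ha1' : v₁.1 = 0 := by linear_combination -ha1
    have h2 : v₂.2 • v₁ + (-v₁.2) • v₂ = 0 := by
      apply Prod.ext_iff.mpr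
      constructor
      · show v₂.2 * v₁.1 + (-v₁.2) * v₂.1 = 0
        rw [ha1', ha2]; ring
      · show v₂.2 * v₁.2 + (-v₁.2) * v₂.2 = 0
        ring
    obtain ⟨hb2, hb1⟩ := hpair _ _ h2
    have hb1' : v₁.2 = 0 := by linear_combination -hb1
    have hv10 : v₁ = 0 := Prod.ext_iff.mpr ⟨ha1', hb1'⟩
    have := hpair 1 0 (by rw [hv10]; simp)
    exact one_ne_zero this.1
  -- integer coordinates
  have hzs : ∀ (m : ℤ) (x : ℂ × ℂ), m • x = ((m : ℂ)) • x :=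
    fun m x => (Int.cast_smul_eq_zsmul ℂ m x).symm
  have hco : ∀ (c c' : ℂ) (x y : ℂ × ℂ),
      c • x + c' • y = (c * x.1 + c' * y.1, c * x.2 + c' * y.2) := fun _ _ _ _ => rfl
  have hrep : ∀ x ∈ L, ∃ m n : ℤ,
      x = ((m : ℂ) * v₁.1 + n * v₂.1, (m : ℂ) * v₁.2 + n * v₂.2) := by
    intro x hx
    have hx' : x ∈ Submodule.span ℤ {v₁, v₂} := hL ▸ hx
    obtain ⟨m, n, hmn⟩ := Submodule.mem_span_pair.mp hx'
    exact ⟨m, n, by rw [← hmn, hzs, hzs, hco]⟩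
  -- consequences of G-invariance
  have hNL : ∀ x ∈ L, ((0 : ℂ), -(2 * (Real.pi : ℂ) * I) * x.1) ∈ L := by
    intro x hx
    have h2 := L.sub_mem (hG x hx) hx
    have h3 : Gmap x - x = ((0 : ℂ), -(2 * (Real.pi : ℂ) * I) * x.1) := by
      apply Prod.ext_iff.mpr
      constructor
      · show x.1 - x.1 = 0
        ring
      · show -(2 * (Real.pi : ℂ) * I) * x.1 + x.2 - x.2 = -(2 * (Real.pi : ℂ) * I) * x.1
        ring
    rwa [h3] at h2
  have hBN : ∀ (x y : ℂ × ℂ),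
      Bform ((0 : ℂ), -(2 * (Real.pi : ℂ) * I) * x.1) y = -(2 * (Real.pi : ℂ) * x.1 * y.1) := by
    intro x y
    simp only [Bform]
    linear_combination (2 * (Real.pi : ℂ) * x.1 * y.1) * I_mul_I
  have hQ : ∀ x ∈ L, ∀ y ∈ L, ∃ m : ℤ, 2 * (Real.pi : ℂ) * x.1 * y.1 = m := by
    intro x hx y hy
    obtain ⟨m, hm⟩ := hBint _ (hNL x hx) y hy
    rw [hBN] at hm
    exact ⟨-m, by push_cast; linear_combination -hm⟩
  have hω : ∀ x ∈ L, ∀ y ∈ L, ∃ m : ℤ, I * (x.1 * y.2 - x.2 * y.1) = m := by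
    intro x hx y hy
    obtain ⟨m₁, hm₁⟩ := hBint x hx y hy
    obtain ⟨m₂, hm₂⟩ := hQ x hx y hy
    simp only [Bform] at hm₁
    exact ⟨m₁ - m₂, by push_cast; linear_combination hm₁ - hm₂⟩
  -- a vector with nonzero first coordinate
  obtain ⟨va, hvaL, hva⟩ : ∃ va, va ∈ L ∧ va.1 ≠ 0 := by
    by_cases h1 : v₁.1 = 0
    · refine ⟨v₂, hv₂L, fun h2 => hΔ ?_⟩
      rw [h1, h2]; ring
    · exact ⟨v₁, hv₁L, h1⟩
  -- construct the generator s = w₁.1 of the first-coordinate image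
  obtain ⟨g₁, ⟨w₁, hw₁L, hw₁⟩, hg₁div⟩ :=
    gen_real L ((2 * (Real.pi : ℂ) * va.1) • ((LinearMap.fst ℂ ℂ ℂ).restrictScalars ℤ))
  simp only [LinearMap.smul_apply, LinearMap.coe_restrictScalars, LinearMap.fst_apply,
    smul_eq_mul] at hw₁ hg₁div
  have hks : ∀ x ∈ L, ∃ k : ℤ, x.1 = k * w₁.1 := by
    intro x hx
    obtain ⟨m, hm⟩ := hQ va hvaL x hx
    obtain ⟨k, hk⟩ := hg₁div m ⟨x, hx, hm.symm⟩
    refine ⟨k, ?_⟩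
    have hc : (2 * (Real.pi : ℂ) * va.1) ≠ 0 := mul_ne_zero hpi hva
    apply mul_left_cancel₀ hc
    rw [hk] at hm
    push_cast at hm
    linear_combination hm + (k : ℂ) * hw₁
  have hs : w₁.1 ≠ 0 := by
    obtain ⟨k, hk⟩ := hks va hvaL
    intro h
    rw [h, mul_zero] at hk
    exact hva hk
  obtain ⟨n, hn⟩ := hQ w₁ hw₁L w₁ hw₁L
  have hnne : n ≠ 0 := by
    intro h
    rw [h] at hn
    push_cast at hn
    exact (mul_ne_zero (mul_ne_zero hpi hs) hs) hn
  -- the kernel of the first coordinate inside L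
  obtain ⟨g₂, ⟨u₂, hu₂K, hu₂⟩, hg₂div⟩ :=
    gen_real (L ⊓ LinearMap.ker ((LinearMap.fst ℂ ℂ ℂ).restrictScalars ℤ))
      ((I * w₁.1) • ((LinearMap.snd ℂ ℂ ℂ).restrictScalars ℤ))
  simp only [LinearMap.smul_apply, LinearMap.coe_restrictScalars, LinearMap.snd_apply,
    smul_eq_mul, Submodule.mem_inf, LinearMap.mem_ker, LinearMap.fst_apply] at hu₂K hu₂ hg₂div
  obtain ⟨hu₂L, hu₂1⟩ := hu₂K
  have hIs : I * w₁.1 ≠ 0 := mul_ne_zero I_ne_zero hs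
  have hKer : ∀ x ∈ L, x.1 = 0 → ∃ l : ℤ, x.2 = l * u₂.2 := by
    intro x hx hx1
    obtain ⟨m, hm⟩ := hω w₁ hw₁L x hx
    have hm' : (m : ℂ) = I * w₁.1 * x.2 := by linear_combination -hm - I * w₁.2 * hx1
    obtain ⟨l, hl⟩ := hg₂div m ⟨x, ⟨hx, hx1⟩, hm'⟩
    refine ⟨l, ?_⟩
    apply mul_left_cancel₀ hIs
    rw [hl] at hm'
    push_cast at hm'
    linear_combination -hm' + (l : ℂ) * hu₂
  have hdec : ∀ x ∈ L, ∃ k l : ℤ, x.1 = k * w₁.1 ∧ x.2 = k * w₁.2 + l * u₂.2 := by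
    intro x hx
    obtain ⟨k, hk⟩ := hks x hx
    have hyL : x - k • w₁ ∈ L := L.sub_mem hx (L.smul_mem k hw₁L)
    have hy1 : (x - k • w₁).1 = 0 := by
      rw [hzs]
      show x.1 - (k : ℂ) * w₁.1 = 0
      rw [hk]; ring
    obtain ⟨l, hl⟩ := hKer _ hyL hy1
    have hy2 : (x - k • w₁).2 = x.2 - (k : ℂ) * w₁.2 := by rw [hzs]; rfl
    rw [hy2] at hl
    exact ⟨k, l, hk, by linear_combination hl⟩
  -- dual basis functionals from surjectivity
  have key : ∀ t₁ t₂ : ℤ, ∃ x ∈ L, Bform x v₁ = (t₁ : ℂ) ∧ Bform x v₂ = (t₂ : ℂ) := by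
    intro t₁ t₂
    set c₁ : ℂ := ((t₁ : ℂ) * v₂.2 - t₂ * v₁.2) / (v₁.1 * v₂.2 - v₁.2 * v₂.1) with hc₁
    set c₂ : ℂ := ((t₂ : ℂ) * v₁.1 - t₁ * v₂.1) / (v₁.1 * v₂.2 - v₁.2 * v₂.1) with hc₂
    set φ : (ℂ × ℂ) →ₗ[ℂ] ℂ := c₁ • LinearMap.fst ℂ ℂ ℂ + c₂ • LinearMap.snd ℂ ℂ ℂ with hφdef
    have hφ : ∀ x : ℂ × ℂ, φ x = c₁ * x.1 + c₂ * x.2 := by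
      intro x
      simp [hφdef, smul_eq_mul]
    have hφ₁ : φ v₁ = (t₁ : ℂ) := by
      rw [hφ, hc₁, hc₂]
      rw [div_mul_eq_mul_div, div_mul_eq_mul_div, ← add_div, div_eq_iff hΔ]
      ring
    have hφ₂ : φ v₂ = (t₂ : ℂ) := by
      rw [hφ, hc₁, hc₂]
      rw [div_mul_eq_mul_div, div_mul_eq_mul_div, ← add_div, div_eq_iff hΔ]
      ring
    set ψ : L →ₗ[ℤ] ℂ := (φ.restrictScalars ℤ).comp L.subtype with hψdef
    have hψ : ∀ y : L, ψ y = φ (y : ℂ × ℂ) := fun y => rfl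
    have hψint : ∀ y : L, ∃ m : ℤ, ψ y = (m : ℂ) := by
      rintro ⟨y, hy⟩
      obtain ⟨m, n, hmn⟩ := hrep y hy
      refine ⟨m * t₁ + n * t₂, ?_⟩
      rw [hψ]
      simp only
      rw [hmn, hφ]
      push_cast
      rw [← hφ₁, ← hφ₂, hφ, hφ]
      ring
    obtain ⟨F, hF⟩ := lift_int ψ hψint
    obtain ⟨x, hxL, hx⟩ := hsurj F
    refine ⟨x, hxL, ?_, ?_⟩
    · have h1 := hx ⟨v₁, hv₁L⟩
      rw [hF ⟨v₁, hv₁L⟩, hψ] at h1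
      rw [h1, hφ₁]
    · have h1 := hx ⟨v₂, hv₂L⟩
      rw [hF ⟨v₂, hv₂L⟩, hψ] at h1
      rw [h1, hφ₂]
  -- Gram matrix entries
  obtain ⟨k₁₁, hk₁₁⟩ := hBint v₁ hv₁L v₁ hv₁L
  obtain ⟨k₁₂, hk₁₂⟩ := hBint v₁ hv₁L v₂ hv₂L
  obtain ⟨k₂₁, hk₂₁⟩ := hBint v₂ hv₂L v₁ hv₁L
  obtain ⟨k₂₂, hk₂₂⟩ := hBint v₂ hv₂L v₂ hv₂L
  obtain ⟨x₁, hx₁L, hB₁₁, hB₁₂⟩ := key 1 0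
  obtain ⟨x₂, hx₂L, hB₂₁, hB₂₂⟩ := key 0 1
  obtain ⟨m₁, n₁, hx₁⟩ := hrep x₁ hx₁L
  obtain ⟨m₂, n₂, hx₂⟩ := hrep x₂ hx₂L
  have mkE : ∀ (x : ℂ × ℂ) (m n t : ℤ),
      x = ((m : ℂ) * v₁.1 + n * v₂.1, (m : ℂ) * v₁.2 + n * v₂.2) →
      ∀ (w : ℂ × ℂ) (p q : ℤ), Bform v₁ w = (p : ℂ) → Bform v₂ w = (q : ℂ) →
      Bform x w = (t : ℂ) → m * p + n * q = t := by
    intro x m n t hxc w p q hp hq ht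
    have : ((m * p + n * q : ℤ) : ℂ) = ((t : ℤ) : ℂ) := by
      rw [hxc] at ht
      simp only [Bform] at hp hq ht
      push_cast
      linear_combination ht - (m : ℂ) * hp - (n : ℂ) * hq
    exact_mod_cast this
  have e11 : m₁ * k₁₁ + n₁ * k₂₁ = 1 := mkE x₁ m₁ n₁ 1 hx₁ v₁ k₁₁ k₂₁ hk₁₁ hk₂₁ hB₁₁
  have e12 : m₁ * k₁₂ + n₁ * k₂₂ = 0 := mkE x₁ m₁ n₁ 0 hx₁ v₂ k₁₂ k₂₂ hk₁₂ hk₂₂ hB₁₂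
  have e21 : m₂ * k₁₁ + n₂ * k₂₁ = 0 := mkE x₂ m₂ n₂ 0 hx₂ v₁ k₁₁ k₂₁ hk₁₁ hk₂₁ hB₂₁
  have e22 : m₂ * k₁₂ + n₂ * k₂₂ = 1 := mkE x₂ m₂ n₂ 1 hx₂ v₂ k₁₂ k₂₂ hk₁₂ hk₂₂ hB₂₂
  have hdet : (m₁ * n₂ - n₁ * m₂) * (k₁₁ * k₂₂ - k₁₂ * k₂₁) = 1 := by
    linear_combination (m₂ * k₁₂ + n₂ * k₂₂) * e11 + e22 - (m₁ * k₁₂ + n₁ * k₂₂) * e21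
  have hsqZ : (k₁₂ + k₂₁) ^ 2 = 4 * (k₁₁ * k₂₂) := by
    have : ((k₁₂ : ℂ) + (k₂₁ : ℂ)) ^ 2 = 4 * ((k₁₁ : ℂ) * (k₂₂ : ℂ)) := by
      rw [← hk₁₁, ← hk₁₂, ← hk₂₁, ← hk₂₂]
      simp only [Bform]
      ring
    exact_mod_cast this
  have hd4 : (k₁₂ - k₂₁) ^ 2 = 4 := by
    have hu : IsUnit (k₁₁ * k₂₂ - k₁₂ * k₂₁) :=
      IsUnit.of_mul_eq_one (m₁ * n₂ - n₁ * m₂) (by linear_combination hdet)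
    rcases Int.isUnit_iff.mp hu with h | h
    · linear_combination hsqZ + 4 * h
    · exfalso
      have hneg : (k₁₂ - k₂₁) ^ 2 = -4 := by linear_combination hsqZ + 4 * h
      nlinarith [sq_nonneg (k₁₂ - k₂₁)]
  -- relate to g₂
  have hd2 : ((k₁₂ : ℂ) - k₂₁) = 2 * (I * (v₁.1 * v₂.2 - v₁.2 * v₂.1)) := by
    have h12 := hk₁₂
    have h21 := hk₂₁
    simp only [Bform] at h12 h21
    linear_combination h21 - h12
  obtain ⟨k₁, l₁, hv₁1, hv₁2⟩ := hdec v₁ hv₁L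
  obtain ⟨k₂, l₂, hv₂1, hv₂2⟩ := hdec v₂ hv₂L
  have hgint : 2 * (k₁ * l₂ - l₁ * k₂) * g₂ = k₁₂ - k₂₁ := by
    have : ((2 * (k₁ * l₂ - l₁ * k₂) * g₂ : ℤ) : ℂ) = ((k₁₂ : ℂ) - k₂₁) := by
      push_cast
      rw [hd2, hu₂, hv₁1, hv₁2, hv₂1, hv₂2]
      ring
    exact_mod_cast this
  have hDg : ((k₁ * l₂ - l₁ * k₂) * g₂) ^ 2 = 1 := by
    have h4 : (2 * (k₁ * l₂ - l₁ * k₂) * g₂) ^ 2 = 4 := by rw [hgint]; exact hd4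
    have h4' : 4 * (((k₁ * l₂ - l₁ * k₂) * g₂) ^ 2) = 4 := by linear_combination h4
    linarith
  have hg₂unit : g₂ = 1 ∨ g₂ = -1 :=
    Int.isUnit_iff.mp (IsUnit.of_mul_eq_one ((k₁ * l₂ - l₁ * k₂) ^ 2 * g₂)
      (by linear_combination hDg))
  have hg₂sq : (g₂ : ℂ) * (g₂ : ℂ) = 1 := by
    rcases hg₂unit with h | h <;> rw [h] <;> norm_num
  -- the second generator
  have hu22 : u₂.2 = -(g₂ : ℂ) * I / w₁.1 := by
    rw [eq_div_iff hs]
    linear_combination I * hu₂ + (w₁.1 * u₂.2) * I_mul_I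
  have hw2mem : ((0 : ℂ), I / w₁.1) ∈ L := by
    have heq : ((0 : ℂ), I / w₁.1) = (-g₂ : ℤ) • u₂ := by
      rw [hzs]
      apply Prod.ext_iff.mpr
      constructor
      · show (0 : ℂ) = ((-g₂ : ℤ) : ℂ) * u₂.1
        rw [hu₂1]; ring
      · show I / w₁.1 = ((-g₂ : ℤ) : ℂ) * u₂.2
        rw [hu22]
        push_cast
        linear_combination (-I / w₁.1) * hg₂sq
    rw [heq]
    exact L.smul_mem _ hu₂L
  -- conclusion
  refine ⟨n, hnne, w₁.2 / w₁.1, w₁.1, ?_, ?_⟩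
  · rw [eq_div_iff hpi]
    linear_combination hn
  · have hgen1 : w₁.1 • (e₁ + (w₁.2 / w₁.1) • e₂) = w₁ := by
      apply Prod.ext_iff.mpr
      constructor
      · show w₁.1 * (1 + w₁.2 / w₁.1 * 0) = w₁.1
        ring
      · show w₁.1 * (0 + w₁.2 / w₁.1 * 1) = w₁.2
        field_simp
        ring
    have hgen2 : (I / w₁.1) • e₂ = ((0 : ℂ), I / w₁.1) := by
      apply Prod.ext_iff.mpr
      constructor
      · show I / w₁.1 * 0 = 0
        ring
      · show I / w₁.1 * 1 = I / w₁.1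
        ring
    rw [hgen1, hgen2]
    apply le_antisymm
    · intro x hx
      obtain ⟨k, l, hx1, hx2⟩ := hdec x hx
      apply Submodule.mem_span_pair.mpr
      refine ⟨k, -(l * g₂), ?_⟩
      rw [hzs, hzs, hco]
      apply Prod.ext_iff.mpr
      constructor
      · show (k : ℂ) * w₁.1 + ((-(l * g₂) : ℤ) : ℂ) * 0 = x.1
        rw [hx1]; ring
      · show (k : ℂ) * w₁.2 + ((-(l * g₂) : ℤ) : ℂ) * (I / w₁.1) = x.2
        rw [hx2, hu22]
        push_cast
        ring
    · rw [Submodule.span_le]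
      simp only [Set.insert_subset_iff, Set.singleton_subset_iff, SetLike.mem_coe]
      exact ⟨hw₁L, hw2mem⟩
end

section
/- Let R be a commutative ring, M an R-module, and u ∈ R a unit. Let A, B ⊆ M be R-submodules such that u^{−1}·A ⊆ A (equivalently A ⊆ u·A) and u·B ⊆ B, and suppose M = A ⊕ B internally, i.e. A ∩ B = 0 and A + B = M. Then both natural maps (u·A) ∩ B → (u·A)/A (inclusion followed by the quotient map) and (u·A) ∩ B → B/(u·B) (inclusion followed by the quotient map) are R-module isomorphisms. -/
/-- Let `R` be a commutative ring, `M` an `R`-module and `u ∈ R` a unit.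
If `A, B ⊆ M` are submodules with `u⁻¹·A ⊆ A`, `u·B ⊆ B` and `M = A ⊕ B`
(internally), then — writing `uA = u·A` and `uB = u·B` — both natural maps
`(u·A) ∩ B → (u·A)/A` and `(u·A) ∩ B → B/(u·B)` (inclusion followed by the
quotient map) are isomorphisms. -/
theorem opposite_module_decomposition
    {R M : Type} [CommRing R] [AddCommGroup M] [Module R M]
    (u : Rˣ) (A B uA uB : Submodule R M)
    (huA : uA = A.map ((u : R) • (LinearMap.id : M →ₗ[R] M)))
    (huB : uB = B.map ((u : R) • (LinearMap.id : M →ₗ[R] M)))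
    (hAinv : ∀ a ∈ A, ((u⁻¹ : Rˣ) : R) • a ∈ A)
    (hBinv : ∀ b ∈ B, (u : R) • b ∈ B)
    (hdisj : A ⊓ B = ⊥) (hsum : A ⊔ B = ⊤)
    (hAle : A ≤ uA) :
    Function.Bijective
      ((A.comap uA.subtype).mkQ.comp
        (Submodule.inclusion (inf_le_left : uA ⊓ B ≤ uA))) ∧
    Function.Bijective
      ((uB.comap B.subtype).mkQ.comp
        (Submodule.inclusion (inf_le_right : uA ⊓ B ≤ B))) := by
  have memA : ∀ x : M, x ∈ uA ↔ ∃ a ∈ A, (u : R) • a = x := by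
    intro x; subst huA; simp [Submodule.mem_map]
  have memB : ∀ x : M, x ∈ uB ↔ ∃ b ∈ B, (u : R) • b = x := by
    intro x; subst huB; simp [Submodule.mem_map]
  constructor
  · constructor
    · intro x y hxy
      have h1 : ((x : M) - (y : M)) ∈ A := by
        have := (Submodule.Quotient.eq _).mp hxy
        simpa using this
      have h2 : ((x : M) - (y : M)) ∈ B := B.sub_mem x.2.2 y.2.2
      have h3 : ((x : M) - (y : M)) ∈ A ⊓ B := ⟨h1, h2⟩
      rw [hdisj] at h3
      exact Subtype.ext (sub_eq_zero.mp (by simpa using h3))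
    · intro q
      obtain ⟨⟨x, hx⟩, rfl⟩ := Submodule.mkQ_surjective _ q
      have hxT : x ∈ A ⊔ B := by rw [hsum]; trivial
      obtain ⟨a, ha, b, hb, hab⟩ := Submodule.mem_sup.mp hxT
      have hbuA : b ∈ uA := by
        have hbe : b = x - a := by rw [← hab]; abel
        rw [hbe]; exact uA.sub_mem hx (hAle ha)
      refine ⟨⟨b, hbuA, hb⟩, ?_⟩
      rw [LinearMap.comp_apply]
      rw [Submodule.mkQ_apply, Submodule.mkQ_apply, Submodule.Quotient.eq]
      show ((⟨b, hbuA⟩ : uA) : M) - (⟨x, hx⟩ : uA) ∈ A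
      have : b - x = -a := by rw [← hab]; abel
      simpa [this] using A.neg_mem ha
  · constructor
    · intro x y hxy
      have h1 : ((x : M) - (y : M)) ∈ uB := by
        have := (Submodule.Quotient.eq _).mp hxy
        simpa using this
      have h2 : ((x : M) - (y : M)) ∈ uA := uA.sub_mem x.2.1 y.2.1
      obtain ⟨a, ha, haeq⟩ := (memA _).mp h2
      obtain ⟨b, hb, hbeq⟩ := (memB _).mp h1
      have hab : a = b := by
        have h := haeq.trans hbeq.symm
        have := congrArg (fun z => ((u⁻¹ : Rˣ) : R) • z) h
        simpa [smul_smul, Units.inv_mul] using this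
      have h3 : a ∈ A ⊓ B := ⟨ha, hab ▸ hb⟩
      rw [hdisj] at h3
      have ha0 : a = 0 := by simpa using h3
      have : (x : M) - (y : M) = 0 := by rw [← haeq, ha0, smul_zero]
      exact Subtype.ext (sub_eq_zero.mp this)
    · intro q
      obtain ⟨⟨b, hb⟩, rfl⟩ := Submodule.mkQ_surjective _ q
      have hT : ((u⁻¹ : Rˣ) : R) • b ∈ A ⊔ B := by rw [hsum]; trivial
      obtain ⟨a, ha, b1, hb1, hab⟩ := Submodule.mem_sup.mp hT
      have hkey : (u : R) • a + (u : R) • b1 = b := by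
        have := congrArg (fun z => (u : R) • z) hab
        simpa [smul_add, smul_smul, Units.mul_inv] using this
      have hxuA : (u : R) • a ∈ uA := (memA _).mpr ⟨a, ha, rfl⟩
      have hxB : (u : R) • a ∈ B := by
        have : (u : R) • a = b - (u : R) • b1 := by rw [← hkey]; abel
        rw [this]; exact B.sub_mem hb (hBinv b1 hb1)
      refine ⟨⟨(u : R) • a, hxuA, hxB⟩, ?_⟩
      rw [LinearMap.comp_apply]
      rw [Submodule.mkQ_apply, Submodule.mkQ_apply, Submodule.Quotient.eq]
      show ((u : R) • a : M) - b ∈ uB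
      have : (u : R) • a - b = -((u : R) • b1) := by rw [← hkey]; abel
      rw [this]
      exact uB.neg_mem ((memB _).mpr ⟨b1, hb1, rfl⟩)
end
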